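/- arXiv:2002.09336 — 2 statements merged into one kernel-verified Lean document; each statement's English description precedes it below -/
import Mathlib

section
/- Let U, V be real Hilbert spaces, F : U → V bounded linear, and R : U → ℝ ∪ {+∞} proper and convex. Let 0 ≤ ν ≤ 1/2, let u† satisfy Fu† = v†, and suppose ξ† = (F*F)^ν ω† is a subgradient of R at u† for some ω† ∈ U. Let ‖v† − v^δ‖ ≤ δ and let u_α^δ minimise T_α(u) = (1/2)‖Fu − v^δ‖² + α R(u). Then the Bregman distance satisfies D_{ξ†}(u_α^δ, u†) ≤ δ²/(2α) − (1/(2α))‖F u_α^δ − v^δ‖² + ‖ω†‖ · ‖F(u† − u_α^δ)‖^(2ν) · ‖u† − u_α^δ‖^(1−2ν). -/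
/-!
The source condition turns the linear term of the Bregman distance into
`⟪ω†, (F*F)^ν (u† - u)⟫`, which the interpolation inequality
`‖(F*F)^ν x‖ ≤ ‖F x‖^(2ν) ‖x‖^(1-2ν)` controls. For that inequality, bound `t^(2ν)` on the
spectrum of `F*F` by its tangent line at `λ > 0`; the functional calculus is order preserving,
so `‖(F*F)^ν x‖² ≤ 2ν λ^(2ν-1) ‖F x‖² + (1-2ν) λ^(2ν) ‖x‖²`, and `λ = ‖F x‖² / ‖x‖²` gives the
claim. The remaining terms come from `T_α(u_α^δ) ≤ T_α(u†)` and `‖F u† - v^δ‖ ≤ δ`.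
-/

open ContinuousLinearMap
open scoped RealInnerProductSpace

noncomputable section

/-- `P` is the fractional power `T ^ ν` of the (positive self-adjoint) operator `T`, defined
via the continuous functional calculus: there is a continuous star-algebra homomorphism from
`C(σ(T), ℝ)` to the bounded operators mapping the identity function to `T` (such a
homomorphism is unique by Stone–Weierstrass), and `P` is the image of (a continuous extension
of) the function `x ↦ x ^ ν`. -/
def IsFractionalPower {W : Type*} [NormedAddCommGroup W] [InnerProductSpace ℝ W]
    [CompleteSpace W] (T : W →L[ℝ] W) (ν : ℝ) (P : W →L[ℝ] W) : Prop :=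
  ∃ Φ : C(spectrum ℝ T, ℝ) →⋆ₐ[ℝ] (W →L[ℝ] W),
    Continuous Φ ∧
    Φ ((ContinuousMap.id ℝ).restrict (spectrum ℝ T)) = T ∧
    ∃ f : C(ℝ, ℝ), (∀ x ∈ spectrum ℝ T, f x = x ^ ν) ∧
      Φ (f.restrict (spectrum ℝ T)) = P

/-- `ξ` is a subgradient of the extended-real-valued functional `R` at `u`:
`R u < +∞` and `R w ≥ R u + ⟪ξ, w - u⟫` for all `w`. -/
def IsSubgradient {U : Type*} [NormedAddCommGroup U] [InnerProductSpace ℝ U]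
    (R : U → EReal) (ξ u : U) : Prop :=
  R u < ⊤ ∧ ∀ w, R u + ((⟪ξ, w - u⟫ : ℝ) : EReal) ≤ R w

/-- Convexity for extended-real-valued functionals. -/
def ErealConvexOn {U : Type*} [NormedAddCommGroup U] [InnerProductSpace ℝ U]
    (R : U → EReal) : Prop :=
  ∀ u w : U, ∀ t : ℝ, 0 ≤ t → t ≤ 1 →
    R (t • u + (1 - t) • w) ≤ ((t : ℝ) : EReal) * R u + (((1 - t : ℝ)) : EReal) * R w

/-- The Bregman distance `D_ξ(w, u) = R w - R u - ⟪ξ, w - u⟫`. -/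
def Breg {U : Type*} [NormedAddCommGroup U] [InnerProductSpace ℝ U]
    (R : U → EReal) (ξ w u : U) : EReal :=
  R w - R u - ((⟪ξ, w - u⟫ : ℝ) : EReal)

/-- The Tikhonov functional `T_α(u) = (1/2)‖F u - v‖² + α R(u)`. -/
def Tik {U V : Type*} [NormedAddCommGroup U] [InnerProductSpace ℝ U]
    [NormedAddCommGroup V] [InnerProductSpace ℝ V]
    (F : U →L[ℝ] V) (R : U → EReal) (α : ℝ) (v : V) (u : U) : EReal :=
  (((1 : ℝ) / 2 * ‖F u - v‖ ^ 2 : ℝ) : EReal) + ((α : ℝ) : EReal) * R u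

open scoped InnerProductSpace

namespace Real

theorem rpow_le_tangent_line {θ t l : ℝ} (hθ0 : 0 ≤ θ) (hθ1 : θ ≤ 1) (ht : 0 ≤ t) (hl : 0 < l) :
    t ^ θ ≤ θ * l ^ (θ - 1) * t + (1 - θ) * l ^ θ := by
  have amgm := geom_mean_le_arith_mean2_weighted hθ0 (sub_nonneg.2 hθ1) (div_nonneg ht hl.le)
    zero_le_one (by ring)
  rw [one_rpow, mul_one, div_rpow ht hl.le, div_le_iff₀ (rpow_pos_of_pos hl θ)] at amgm
  calc t ^ θ ≤ (θ * (t / l) + (1 - θ) * 1) * l ^ θ := amgm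
    _ = θ * l ^ (θ - 1) * t + (1 - θ) * l ^ θ := by rw [rpow_sub_one hl.ne']; ring

theorem le_rpow_mul_rpow_of_forall_le_tangent {θ X A B : ℝ} (hθ0 : 0 ≤ θ) (hθ1 : θ ≤ 1)
    (hA : 0 ≤ A) (hB : 0 < B)
    (h : ∀ l > 0, X ≤ θ * l ^ (θ - 1) * A + (1 - θ) * l ^ θ * B) :
    X ≤ A ^ θ * B ^ (1 - θ) := by
  rcases hA.eq_or_lt with rfl | hA
  · rcases hθ0.eq_or_lt with rfl | hθ
    · simpa using h 1 one_pos
    have hlim : Filter.Tendsto (fun l : ℝ => (1 - θ) * l ^ θ * B) (nhdsWithin 0 (Set.Ioi 0))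
        (nhds ((1 - θ) * 0 ^ θ * B)) :=
      (((continuous_rpow_const hθ0).const_mul _).mul_const _).continuousAt.continuousWithinAt
    rw [zero_rpow hθ.ne', zero_mul]
    rw [zero_rpow hθ.ne', mul_zero, zero_mul] at hlim
    refine ge_of_tendsto hlim ?_
    filter_upwards [self_mem_nhdsWithin] with l hl
    simpa using h l hl
  · -- at `l = A / B` both terms of the bound equal `(A / B) ^ θ * B`
    have hl : 0 < A / B := div_pos hA hB
    have hterm : (A / B) ^ (θ - 1) * A = (A / B) ^ θ * B := by
      rw [rpow_sub_one hl.ne']; field_simp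
    calc X ≤ θ * (A / B) ^ (θ - 1) * A + (1 - θ) * (A / B) ^ θ * B := h _ hl
      _ = (A / B) ^ θ * B := by rw [mul_assoc θ, hterm]; ring
      _ = A ^ θ * B ^ (1 - θ) := by
        rw [div_rpow hA.le hB.le, rpow_sub hB, rpow_one]; field_simp

end Real

namespace ContinuousLinearMap

variable {𝕜 E A G : Type*} [RCLike 𝕜] [NormedAddCommGroup E] [InnerProductSpace 𝕜 E]
  [CompleteSpace E]

theorem isPositive_map_of_nonneg [NonUnitalSemiring A] [PartialOrder A] [StarRing A]
    [StarOrderedRing A] [FunLike G A (E →L[𝕜] E)] [NonUnitalRingHomClass G A (E →L[𝕜] E)]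
    [NonUnitalStarRingHomClass G A (E →L[𝕜] E)] (φ : G) {a : A} (ha : 0 ≤ a) :
    (φ a).IsPositive := by
  rw [StarOrderedRing.nonneg_iff] at ha
  induction ha using AddSubmonoid.closure_induction with
  | mem _ hs =>
    obtain ⟨s, rfl⟩ := hs
    rw [map_mul, map_star, star_eq_adjoint]
    exact isPositive_adjoint_comp_self (φ s)
  | zero => simp [isPositive_zero]
  | add _ _ _ _ ha hb => simpa using ha.add hb

theorem norm_map_apply_sq [NonUnitalSemiring A] [StarRing A] [FunLike G A (E →L[𝕜] E)]
    [NonUnitalRingHomClass G A (E →L[𝕜] E)] [NonUnitalStarRingHomClass G A (E →L[𝕜] E)]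
    (φ : G) {a : A} (ha : IsSelfAdjoint a) (x : E) :
    ‖φ a x‖ ^ 2 = RCLike.re ⟪φ (a * a) x, x⟫_𝕜 := by
  rw [map_mul, mul_def, comp_apply, ← adjoint_inner_right, ← star_eq_adjoint, ← map_star,
    ha.star_eq, inner_self_eq_norm_sq]

theorem norm_map_apply_sq_le [NonUnitalRing A] [PartialOrder A] [StarRing A]
    [StarOrderedRing A] [FunLike G A (E →L[𝕜] E)] [NonUnitalRingHomClass G A (E →L[𝕜] E)]
    [NonUnitalStarRingHomClass G A (E →L[𝕜] E)] (φ : G) {a b : A} (ha : IsSelfAdjoint a)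
    (hab : a * a ≤ b) (x : E) : ‖φ a x‖ ^ 2 ≤ RCLike.re ⟪φ b x, x⟫_𝕜 := by
  have := (isPositive_map_of_nonneg φ (sub_nonneg.2 hab)).re_inner_nonneg_left x
  rw [map_sub, sub_apply, inner_sub_left, map_sub, sub_nonneg] at this
  rwa [norm_map_apply_sq φ ha]

end ContinuousLinearMap

namespace IsFractionalPower

variable {W : Type*} [NormedAddCommGroup W] [InnerProductSpace ℝ W] [CompleteSpace W]
  {T P : W →L[ℝ] W} {ν : ℝ}

theorem isSelfAdjoint (hP : IsFractionalPower T ν P) : IsSelfAdjoint P := by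
  obtain ⟨Φ, -, -, f, -, rfl⟩ := hP
  exact (IsSelfAdjoint.all _).map Φ

theorem norm_apply_sq_le (hP : IsFractionalPower T ν P) (hT : T.IsPositive) (hν0 : 0 ≤ ν)
    (hν1 : ν ≤ 1 / 2) {l : ℝ} (hl : 0 < l) (x : W) :
    ‖P x‖ ^ 2 ≤ 2 * ν * l ^ (2 * ν - 1) * ⟪T x, x⟫ + (1 - 2 * ν) * l ^ (2 * ν) * ‖x‖ ^ 2 := by
  obtain ⟨Φ, -, hΦT, f, hf, rfl⟩ := hP
  have hspec : ∀ t ∈ spectrum ℝ T, 0 ≤ t := SpectrumRestricts.nnreal_iff.mp hT.spectrumRestricts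
  have hle : f.restrict (spectrum ℝ T) * f.restrict (spectrum ℝ T) ≤
      (2 * ν * l ^ (2 * ν - 1)) • (ContinuousMap.id ℝ).restrict (spectrum ℝ T) +
        algebraMap ℝ _ ((1 - 2 * ν) * l ^ (2 * ν)) := fun t => by
    have ht := hspec t t.2
    change f t * f t ≤ 2 * ν * l ^ (2 * ν - 1) * t + (1 - 2 * ν) * l ^ (2 * ν)
    rw [hf t t.2, ← Real.rpow_add_of_nonneg ht hν0 hν0, ← two_mul]
    exact Real.rpow_le_tangent_line (by linarith) (by linarith) ht hl
  calc ‖Φ (f.restrict (spectrum ℝ T)) x‖ ^ 2 ≤ _ := norm_map_apply_sq_le Φ (.all _) hle x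
    _ = _ := by
      simp [hΦT, inner_add_left, real_inner_smul_left, Algebra.algebraMap_eq_smul_one]

theorem norm_apply_le {V : Type*} [NormedAddCommGroup V] [InnerProductSpace ℝ V]
    [CompleteSpace V] {F : W →L[ℝ] V} (hP : IsFractionalPower ((adjoint F).comp F) ν P)
    (hν0 : 0 ≤ ν) (hν1 : ν ≤ 1 / 2) (x : W) :
    ‖P x‖ ≤ ‖F x‖ ^ (2 * ν) * ‖x‖ ^ (1 - 2 * ν) := by
  rcases eq_or_ne x 0 with rfl | hx
  · rw [map_zero, norm_zero]
    positivity
  have hsq : ‖P x‖ ^ 2 ≤ (‖F x‖ ^ 2) ^ (2 * ν) * (‖x‖ ^ 2) ^ (1 - 2 * ν) :=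
    Real.le_rpow_mul_rpow_of_forall_le_tangent (by linarith) (by linarith) (by positivity)
      (by positivity) fun l hl => by
        simpa [adjoint_inner_left, real_inner_self_eq_norm_sq] using
          hP.norm_apply_sq_le (isPositive_adjoint_comp_self F) hν0 hν1 hl x
  rw [← Real.rpow_pow_comm (norm_nonneg _), ← Real.rpow_pow_comm (norm_nonneg _), ← mul_pow]
    at hsq
  exact (pow_le_pow_iff_left₀ (norm_nonneg _) (by positivity) two_ne_zero).1 hsq

theorem inner_apply_le {V : Type*} [NormedAddCommGroup V] [InnerProductSpace ℝ V]
    [CompleteSpace V] {F : W →L[ℝ] V} (hP : IsFractionalPower ((adjoint F).comp F) ν P)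
    (hν0 : 0 ≤ ν) (hν1 : ν ≤ 1 / 2) (ω x : W) :
    ⟪P ω, x⟫ ≤ ‖ω‖ * ‖F x‖ ^ (2 * ν) * ‖x‖ ^ (1 - 2 * ν) :=
  calc ⟪P ω, x⟫ = ⟪ω, P x⟫ := hP.isSelfAdjoint.isSymmetric ω x
    _ ≤ ‖ω‖ * ‖P x‖ := real_inner_le_norm _ _
    _ ≤ ‖ω‖ * ‖F x‖ ^ (2 * ν) * ‖x‖ ^ (1 - 2 * ν) := by
      rw [mul_assoc]
      exact mul_le_mul_of_nonneg_left (hP.norm_apply_le hν0 hν1 x) (norm_nonneg _)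

end IsFractionalPower

section Tikhonov

variable {U V : Type*} [NormedAddCommGroup U] [InnerProductSpace ℝ U]
  [NormedAddCommGroup V] [InnerProductSpace ℝ V]
  {F : U →L[ℝ] V} {R : U → EReal} {α : ℝ} {v : V} {u : U}

theorem tik_of_eq_coe {r : ℝ} (hr : R u = r) :
    Tik F R α v u = ((1 / 2 * ‖F u - v‖ ^ 2 + α * r : ℝ) : EReal) := by
  rw [Tik, hr]
  norm_cast

theorem ne_top_of_tik_le_coe (hα : 0 < α) {c : ℝ} (h : Tik F R α v u ≤ c) : R u ≠ ⊤ := by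
  intro htop
  rw [Tik, htop, EReal.coe_mul_top_of_pos hα, EReal.coe_add_top, top_le_iff] at h
  exact EReal.coe_ne_top c h

end Tikhonov

theorem bregman_interpolation_bound_general
    {U V : Type*} [NormedAddCommGroup U] [InnerProductSpace ℝ U] [CompleteSpace U]
    [NormedAddCommGroup V] [InnerProductSpace ℝ V] [CompleteSpace V]
    (F : U →L[ℝ] V) (R : U → EReal) (hRbot : ∀ u, R u ≠ ⊥)
    (ν : ℝ) (hν0 : 0 ≤ ν) (hν1 : ν ≤ 1 / 2)
    (P : U →L[ℝ] U) (hP : IsFractionalPower ((adjoint F).comp F) ν P)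
    (udag : U) (vdag vδ : V) (hud : F udag = vdag)
    (ωdag ξdag : U) (hξ : ξdag = P ωdag) (hsub : IsSubgradient R ξdag udag)
    (α δ : ℝ) (hα : 0 < α) (hnoise : ‖vdag - vδ‖ ≤ δ)
    (uαδ : U) (hmin : ∀ u, Tik F R α vδ uαδ ≤ Tik F R α vδ u) :
    Breg R ξdag uαδ udag
      ≤ ((δ ^ 2 / (2 * α) : ℝ) : EReal)
        - ((1 / (2 * α) * ‖F uαδ - vδ‖ ^ 2 : ℝ) : EReal)
        + ((‖ωdag‖ * ‖F (udag - uαδ)‖ ^ (2 * ν) * ‖udag - uαδ‖ ^ (1 - 2 * ν) : ℝ) : EReal) := by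
  subst hξ hud
  obtain ⟨r₀, hr₀⟩ : ∃ r : ℝ, R udag = r :=
    ⟨_, (EReal.coe_toReal hsub.1.ne (hRbot udag)).symm⟩
  have hTik := hmin udag
  rw [tik_of_eq_coe hr₀] at hTik
  obtain ⟨r, hr⟩ : ∃ r : ℝ, R uαδ = r :=
    ⟨_, (EReal.coe_toReal (ne_top_of_tik_le_coe hα hTik) (hRbot uαδ)).symm⟩
  rw [tik_of_eq_coe hr, EReal.coe_le_coe_iff] at hTik
  have hdata : ‖F udag - vδ‖ ^ 2 ≤ δ ^ 2 := pow_le_pow_left₀ (norm_nonneg _) hnoise 2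
  have hsource := hP.inner_apply_le hν0 hν1 ωdag (udag - uαδ)
  have hR : r - r₀ ≤ δ ^ 2 / (2 * α) - 1 / (2 * α) * ‖F uαδ - vδ‖ ^ 2 := by
    refine le_of_mul_le_mul_left ?_ hα
    field_simp
    linarith
  rw [Breg, hr, hr₀, ← neg_sub udag uαδ, inner_neg_right]
  norm_cast
  linarith

/-- Bregman distance bound from the interpolation inequality. -/
theorem bregman_interpolation_bound
    {U V : Type*} [NormedAddCommGroup U] [InnerProductSpace ℝ U] [CompleteSpace U]
    [NormedAddCommGroup V] [InnerProductSpace ℝ V] [CompleteSpace V]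
    (F : U →L[ℝ] V) (R : U → EReal) (hRbot : ∀ u, R u ≠ ⊥) (hconv : ErealConvexOn R)
    (ν : ℝ) (hν0 : 0 ≤ ν) (hν1 : ν ≤ 1 / 2)
    (P : U →L[ℝ] U) (hP : IsFractionalPower ((adjoint F).comp F) ν P)
    (udag : U) (vdag vδ : V) (hud : F udag = vdag)
    (ωdag ξdag : U) (hξ : ξdag = P ωdag) (hsub : IsSubgradient R ξdag udag)
    (α δ : ℝ) (hα : 0 < α) (hδ : 0 < δ) (hnoise : ‖vdag - vδ‖ ≤ δ)
    (uαδ : U) (hmin : ∀ u, Tik F R α vδ uαδ ≤ Tik F R α vδ u) :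
    Breg R ξdag uαδ udag
      ≤ ((δ ^ 2 / (2 * α) : ℝ) : EReal)
        - ((1 / (2 * α) * ‖F uαδ - vδ‖ ^ 2 : ℝ) : EReal)
        + ((‖ωdag‖ * ‖F (udag - uαδ)‖ ^ (2 * ν) * ‖udag - uαδ‖ ^ (1 - 2 * ν) : ℝ) : EReal) :=
  bregman_interpolation_bound_general F R hRbot ν hν0 hν1 P hP udag vdag vδ hud ωdag ξdag hξ hsub α
    δ hα hnoise uαδ hmin
end
end

section
/- (Basic convergence rates, estimate form.) Let U, V be real Hilbert spaces, F : U → V bounded linear, R : U → ℝ ∪ {+∞} proper and convex, and 0 < ν ≤ 1/2. Suppose ξ† = (F*F)^ν ω† is a subgradient of R at u†, where Fu† = v†. Fix M > 0. Then there exist constants C₂, C₃ > 0, depending only on ν, ‖ω†‖, and M, such that for all δ > 0, α > 0, every v^δ with ‖v† − v^δ‖ ≤ δ, and every minimiser u_α^δ of T_α(u) = (1/2)‖Fu − v^δ‖² + αR(u) satisfying ‖u_α^δ − u†‖ ≤ M, one has D_{ξ†}(u_α^δ, u†) ≤ δ²/(2α) + C₂ δ^(2ν) + C₃ α^(ν/(1−ν)).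 -/
open ContinuousLinearMap
open scoped RealInnerProductSpace

noncomputable section

/-!
Comparing the minimiser `u` with `u†` in the Tikhonov functional bounds the Bregman distance by
`(δ² - ‖F u - v^δ‖²) / (2α) - ⟪ω†, (F*F)^ν (u - u†)⟫`. Concavity of `t ↦ t^(2ν)` gives the
tangent-line bound `t^(2ν) ≤ 2ν c^(2ν-1) t + (1 - 2ν) c^(2ν)` on the spectrum of `F*F`; the
functional calculus turns it into the interpolation inequality
`‖(F*F)^ν x‖ ≤ √(2ν) c^(ν-1/2) ‖F x‖ + √(1-2ν) c^ν ‖x‖` for every `c > 0`. Taking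
`c = δ² + α^(1/(1-ν))` and absorbing the `‖F u - v^δ‖` term by Young's inequality leaves only
terms of order `δ^(2ν)` and `α^(ν/(1-ν))`.
-/

section FunctionalCalculus

variable {X W : Type*} [TopologicalSpace X] [NormedAddCommGroup W] [InnerProductSpace ℝ W]
  [CompleteSpace W]

theorem StarAlgHom.isPositive_apply_of_nonneg (Φ : C(X, ℝ) →⋆ₐ[ℝ] (W →L[ℝ] W))
    {g : C(X, ℝ)} (hg : 0 ≤ g) : (Φ g).IsPositive := by
  set h : C(X, ℝ) := ⟨fun x => √(g x), by fun_prop⟩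
  have hg_eq : g = star h * h := by
    ext x
    simpa [h] using (Real.mul_self_sqrt (hg x)).symm
  rw [hg_eq, map_mul, map_star, star_eq_adjoint]
  exact isPositive_adjoint_comp_self (Φ h)

theorem StarAlgHom.inner_apply_le_of_le (Φ : C(X, ℝ) →⋆ₐ[ℝ] (W →L[ℝ] W))
    {g₁ g₂ : C(X, ℝ)} (hg : g₁ ≤ g₂) (x : W) : ⟪Φ g₁ x, x⟫ ≤ ⟪Φ g₂ x, x⟫ := by
  have := (Φ.isPositive_apply_of_nonneg (sub_nonneg.2 hg)).inner_nonneg_left x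
  rwa [map_sub, sub_apply, inner_sub_left, sub_nonneg] at this

theorem IsFractionalPower.isSelfAdjoint_s4 {T P : W →L[ℝ] W} {ν : ℝ}
    (hP : IsFractionalPower T ν P) : IsSelfAdjoint P := by
  obtain ⟨Φ, -, -, f, -, rfl⟩ := hP
  exact (IsSelfAdjoint.all _).map Φ

theorem IsFractionalPower.norm_sq_apply_le {T P : W →L[ℝ] W} {ν : ℝ}
    (hP : IsFractionalPower T ν P) {a b : ℝ}
    (hab : ∀ t ∈ spectrum ℝ T, (t ^ ν) ^ 2 ≤ a * t + b) (x : W) :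
    ‖P x‖ ^ 2 ≤ a * ⟪T x, x⟫ + b * ‖x‖ ^ 2 := by
  have hPsa := hP.isSelfAdjoint_s4
  obtain ⟨Φ, -, hΦT, f, hf, hfP⟩ := hP
  set fσ := f.restrict (spectrum ℝ T)
  set idσ := (ContinuousMap.id ℝ).restrict (spectrum ℝ T)
  have hle : fσ ^ 2 ≤ a • idσ + b • 1 := fun t => by
    simpa [fσ, idσ, hf t t.2] using hab t t.2
  have hP_sq : ⟪Φ (fσ ^ 2) x, x⟫ = ‖P x‖ ^ 2 := by
    rw [map_pow, hfP, sq]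
    exact (hPsa.isSymmetric (P x) x).trans (real_inner_self_eq_norm_sq _)
  have hrhs : ⟪Φ (a • idσ + b • 1) x, x⟫ = a * ⟪T x, x⟫ + b * ‖x‖ ^ 2 := by
    simp [hΦT, inner_add_left, real_inner_smul_left]
  rw [← hP_sq, ← hrhs]
  exact Φ.inner_apply_le_of_le hle x

end FunctionalCalculus

theorem Real.rpow_le_tangent {p t c : ℝ} (hp₀ : 0 ≤ p) (hp₁ : p ≤ 1) (ht : 0 ≤ t) (hc : 0 < c) :
    t ^ p ≤ p * c ^ (p - 1) * t + (1 - p) * c ^ p := by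
  have hbern := rpow_one_add_le_one_add_mul_self
    (by linarith [div_nonneg ht hc.le] : -1 ≤ t / c - 1) hp₀ hp₁
  rw [add_sub_cancel, Real.div_rpow ht hc.le, div_le_iff₀ (by positivity)] at hbern
  calc t ^ p ≤ (1 + p * (t / c - 1)) * c ^ p := hbern
    _ = p * (c ^ p / c) * t + (1 - p) * c ^ p := by field_simp; ring
    _ = p * c ^ (p - 1) * t + (1 - p) * c ^ p := by rw [Real.rpow_sub_one hc.ne']

theorem mul_le_sq_div_add_sq_mul (a e : ℝ) {α : ℝ} (hα : 0 < α) :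
    a * e ≤ e ^ 2 / (2 * α) + a ^ 2 * α / 2 := by
  rw [div_add' _ _ _ (by positivity), le_div_iff₀ (by positivity)]
  nlinarith [sq_nonneg (e - a * α)]

theorem sq_sqrt_two_mul_mul_rpow {ν c : ℝ} (hν : 0 ≤ ν) (hc : 0 ≤ c) :
    (√(2 * ν) * c ^ (ν - 1 / 2)) ^ 2 = 2 * ν * c ^ (2 * ν - 1) := by
  rw [mul_pow, Real.sq_sqrt (by positivity), ← Real.rpow_mul_natCast hc]
  ring_nf

theorem sq_sqrt_one_sub_two_mul_mul_rpow {ν c : ℝ} (hν : ν ≤ 1 / 2) (hc : 0 ≤ c) :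
    (√(1 - 2 * ν) * c ^ ν) ^ 2 = (1 - 2 * ν) * c ^ (2 * ν) := by
  rw [mul_pow, Real.sq_sqrt (by linarith), ← Real.rpow_mul_natCast hc]
  ring_nf

theorem rpow_sub_half_mul_le {δ c ν : ℝ} (hδ : 0 < δ) (hc : δ ^ 2 ≤ c) (hν : ν ≤ 1 / 2) :
    c ^ (ν - 1 / 2) * δ ≤ δ ^ (2 * ν) := by
  calc c ^ (ν - 1 / 2) * δ ≤ (δ ^ 2) ^ (ν - 1 / 2) * δ :=
        mul_le_mul_of_nonneg_right
          (Real.rpow_le_rpow_of_nonpos (by positivity) hc (by linarith)) hδ.le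
    _ = δ ^ (2 * ν - 1) * δ := by
        rw [← Real.rpow_natCast_mul hδ.le]
        ring_nf
    _ = δ ^ (2 * ν) := by rw [Real.rpow_sub_one hδ.ne', div_mul_cancel₀ _ hδ.ne']

theorem rpow_two_mul_sub_one_mul_le {α c ν : ℝ} (hα : 0 < α) (hc : α ^ (1 / (1 - ν)) ≤ c)
    (hν : ν ≤ 1 / 2) : c ^ (2 * ν - 1) * α ≤ α ^ (ν / (1 - ν)) := by
  have hν' : 1 - ν ≠ 0 := by linarith
  calc c ^ (2 * ν - 1) * α ≤ (α ^ (1 / (1 - ν))) ^ (2 * ν - 1) * α :=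
        mul_le_mul_of_nonneg_right
          (Real.rpow_le_rpow_of_nonpos (by positivity) hc (by linarith)) hα.le
    _ = α ^ ((2 * ν - 1) / (1 - ν) + 1) := by
        rw [← Real.rpow_mul hα.le, Real.rpow_add_one hα.ne']
        ring_nf
    _ = α ^ (ν / (1 - ν)) := by
        congr 1
        field_simp
        ring

theorem rpow_sq_add_rpow_le {δ α ν : ℝ} (hδ : 0 ≤ δ) (hα : 0 < α) (hν₀ : 0 ≤ ν) (hν₁ : ν ≤ 1) :
    (δ ^ 2 + α ^ (1 / (1 - ν))) ^ ν ≤ δ ^ (2 * ν) + α ^ (ν / (1 - ν)) := by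
  calc (δ ^ 2 + α ^ (1 / (1 - ν))) ^ ν ≤ (δ ^ 2) ^ ν + (α ^ (1 / (1 - ν))) ^ ν :=
        Real.rpow_add_le_add_rpow (by positivity) (by positivity) hν₀ hν₁
    _ = δ ^ (2 * ν) + α ^ (ν / (1 - ν)) := by
        rw [← Real.rpow_natCast_mul hδ, ← Real.rpow_mul hα.le]
        ring_nf

section SourceCondition

variable {U V : Type*} [NormedAddCommGroup U] [InnerProductSpace ℝ U] [CompleteSpace U]
  [NormedAddCommGroup V] [InnerProductSpace ℝ V] [CompleteSpace V]

theorem IsFractionalPower.norm_apply_le_s4 {F : U →L[ℝ] V} {ν : ℝ} {P : U →L[ℝ] U}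
    (hP : IsFractionalPower (adjoint F ∘L F) ν P) (hν₀ : 0 ≤ ν) (hν₁ : ν ≤ 1 / 2)
    {c : ℝ} (hc : 0 < c) (x : U) :
    ‖P x‖ ≤ √(2 * ν) * c ^ (ν - 1 / 2) * ‖F x‖ + √(1 - 2 * ν) * c ^ ν * ‖x‖ := by
  have hspec : ∀ t ∈ spectrum ℝ (adjoint F ∘L F), 0 ≤ t :=
    SpectrumRestricts.nnreal_iff.mp (isPositive_adjoint_comp_self F).spectrumRestricts
  have hsq := hP.norm_sq_apply_le
    (a := 2 * ν * c ^ (2 * ν - 1)) (b := (1 - 2 * ν) * c ^ (2 * ν))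
    (fun t ht => by
      rw [← Real.rpow_mul_natCast (hspec t ht)]
      simpa [mul_comm ν] using
        Real.rpow_le_tangent (by positivity) (by linarith) (hspec t ht) hc) x
  have hFx : ⟪(adjoint F ∘L F) x, x⟫ = ‖F x‖ ^ 2 := by
    rw [comp_apply, adjoint_inner_left, real_inner_self_eq_norm_sq]
  refine le_of_pow_le_pow_left₀ two_ne_zero (by positivity) (hsq.trans ?_)
  rw [hFx]
  have hA : 0 ≤ √(2 * ν) * c ^ (ν - 1 / 2) * ‖F x‖ := by positivity
  have hB : 0 ≤ √(1 - 2 * ν) * c ^ ν * ‖x‖ := by positivity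
  rw [← sq_sqrt_two_mul_mul_rpow hν₀ hc.le, ← sq_sqrt_one_sub_two_mul_mul_rpow hν₁ hc.le]
  nlinarith [mul_nonneg hA hB]

theorem IsFractionalPower.neg_inner_apply_le {F : U →L[ℝ] V} {ν : ℝ} {P : U →L[ℝ] U}
    (hP : IsFractionalPower (adjoint F ∘L F) ν P) (hν₀ : 0 ≤ ν) (hν₁ : ν ≤ 1 / 2)
    (ω z : U) {e δ α M : ℝ} (hδ : 0 < δ) (hα : 0 < α) (hFz : ‖F z‖ ≤ e + δ) (hz : ‖z‖ ≤ M) :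
    -⟪P ω, z⟫ ≤ e ^ 2 / (2 * α) + ‖ω‖ * (√(2 * ν) + √(1 - 2 * ν) * M) * δ ^ (2 * ν)
      + ‖ω‖ * (‖ω‖ * ν + √(1 - 2 * ν) * M) * α ^ (ν / (1 - ν)) := by
  set c := δ ^ 2 + α ^ (1 / (1 - ν)) with hc_def
  have hc : 0 < c := by positivity
  have hM : 0 ≤ M := (norm_nonneg z).trans hz
  have hyoung : ‖ω‖ * √(2 * ν) * c ^ (ν - 1 / 2) * e
      ≤ e ^ 2 / (2 * α) + ‖ω‖ ^ 2 * ν * (c ^ (2 * ν - 1) * α) := by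
    have := mul_le_sq_div_add_sq_mul (‖ω‖ * (√(2 * ν) * c ^ (ν - 1 / 2))) e hα
    rw [mul_pow, sq_sqrt_two_mul_mul_rpow hν₀ hc.le] at this
    linarith
  calc -⟪P ω, z⟫ ≤ ‖ω‖ * ‖P z‖ := by
        rw [show ⟪P ω, z⟫ = ⟪ω, P z⟫ from hP.isSelfAdjoint_s4.isSymmetric ω z]
        exact (neg_le_abs _).trans (abs_real_inner_le_norm _ _)
    _ ≤ ‖ω‖ * (√(2 * ν) * c ^ (ν - 1 / 2) * (e + δ) + √(1 - 2 * ν) * c ^ ν * M) := by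
        gcongr
        exact (hP.norm_apply_le_s4 hν₀ hν₁ hc z).trans (by gcongr)
    _ = ‖ω‖ * √(2 * ν) * c ^ (ν - 1 / 2) * e + ‖ω‖ * √(2 * ν) * (c ^ (ν - 1 / 2) * δ)
          + ‖ω‖ * √(1 - 2 * ν) * M * c ^ ν := by ring
    _ ≤ (e ^ 2 / (2 * α) + ‖ω‖ ^ 2 * ν * α ^ (ν / (1 - ν))) + ‖ω‖ * √(2 * ν) * δ ^ (2 * ν)
          + ‖ω‖ * √(1 - 2 * ν) * M * (δ ^ (2 * ν) + α ^ (ν / (1 - ν))) := by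
        gcongr ?_ + _ * ?_ + _ * ?_
        · refine hyoung.trans ?_
          gcongr
          exact rpow_two_mul_sub_one_mul_le hα (by simp [hc_def]; positivity) hν₁
        · exact rpow_sub_half_mul_le hδ (by simp [hc_def]; positivity) hν₁
        · exact rpow_sq_add_rpow_le hδ.le hα hν₀ (by linarith)
    _ = _ := by ring

end SourceCondition

theorem breg_le_of_forall_tik_le {U V : Type*} [NormedAddCommGroup U] [InnerProductSpace ℝ U]
    [NormedAddCommGroup V] [InnerProductSpace ℝ V] {F : U →L[ℝ] V} {R : U → EReal}
    (hR : ∀ u, R u ≠ ⊥) {α : ℝ} (hα : 0 < α) {v : V} {u u₀ : U} (hu₀ : R u₀ < ⊤)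
    (hmin : ∀ w, Tik F R α v u ≤ Tik F R α v w) (ξ : U) :
    Breg R ξ u u₀
      ≤ (((‖F u₀ - v‖ ^ 2 - ‖F u - v‖ ^ 2) / (2 * α) - ⟪ξ, u - u₀⟫ : ℝ) : EReal) := by
  obtain ⟨r₀, hr₀⟩ : ∃ r₀ : ℝ, R u₀ = r₀ := ⟨_, (EReal.coe_toReal hu₀.ne (hR u₀)).symm⟩
  have hmin₀ := hmin u₀
  simp only [Tik, hr₀] at hmin₀
  obtain ⟨r, hr⟩ : ∃ r : ℝ, R u = r := by
    refine ⟨_, (EReal.coe_toReal (fun htop => ?_) (hR u)).symm⟩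
    rw [htop, EReal.coe_mul_top_of_pos hα, EReal.coe_add_top, top_le_iff] at hmin₀
    exact EReal.coe_ne_top _ (by exact_mod_cast hmin₀)
  rw [hr] at hmin₀
  norm_cast at hmin₀
  simp only [Breg, hr, hr₀]
  norm_cast
  rw [sub_le_sub_iff_right, le_div_iff₀ (by positivity)]
  linarith

theorem basic_rates_estimate_general
    {U V : Type*} [NormedAddCommGroup U] [InnerProductSpace ℝ U] [CompleteSpace U]
    [NormedAddCommGroup V] [InnerProductSpace ℝ V] [CompleteSpace V]
    (F : U →L[ℝ] V) (R : U → EReal) (hRbot : ∀ u, R u ≠ ⊥)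
    (ν : ℝ) (hν0 : 0 < ν) (hν1 : ν ≤ 1 / 2)
    (P : U →L[ℝ] U) (hP : IsFractionalPower ((adjoint F).comp F) ν P)
    (udag : U) (vdag : V) (hud : F udag = vdag)
    (ωdag ξdag : U) (hξ : ξdag = P ωdag) (hsub : IsSubgradient R ξdag udag)
    (M : ℝ) :
    ∃ C₂ C₃ : ℝ, 0 < C₂ ∧ 0 < C₃ ∧
      ∀ δ α : ℝ, 0 < δ → 0 < α → ∀ vδ : V, ‖vdag - vδ‖ ≤ δ →
        ∀ uαδ : U, (∀ u, Tik F R α vδ uαδ ≤ Tik F R α vδ u) → ‖uαδ - udag‖ ≤ M →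
          Breg R ξdag uαδ udag
            ≤ ((δ ^ 2 / (2 * α) + C₂ * δ ^ (2 * ν) + C₃ * α ^ (ν / (1 - ν)) : ℝ) : EReal) := by
  set c₂ := ‖ωdag‖ * (√(2 * ν) + √(1 - 2 * ν) * M)
  set c₃ := ‖ωdag‖ * (‖ωdag‖ * ν + √(1 - 2 * ν) * M)
  refine ⟨max c₂ 1, max c₃ 1, by positivity, by positivity, ?_⟩
  intro δ α hδ hα vδ hvδ u hmin hu
  have hFz : ‖F (u - udag)‖ ≤ ‖F u - vδ‖ + δ := by
    rw [map_sub, hud, ← sub_add_sub_cancel _ vδ]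
    exact (norm_add_le _ _).trans (add_le_add le_rfl ((norm_sub_rev _ _).trans_le hvδ))
  have hsource := hP.neg_inner_apply_le hν0.le hν1 ωdag _ hδ hα hFz hu
  refine (breg_le_of_forall_tik_le hRbot hα hsub.1 hmin ξdag).trans (EReal.coe_le_coe_iff.2 ?_)
  have hdata : ‖F udag - vδ‖ ^ 2 ≤ δ ^ 2 := by rw [hud]; gcongr
  have hc₂ : c₂ * δ ^ (2 * ν) ≤ max c₂ 1 * δ ^ (2 * ν) := by gcongr; exact le_max_left _ _
  have hc₃ : c₃ * α ^ (ν / (1 - ν)) ≤ max c₃ 1 * α ^ (ν / (1 - ν)) := by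
    gcongr; exact le_max_left _ _
  rw [hξ, sub_div]
  linarith [div_le_div_of_nonneg_right hdata (by positivity : (0 : ℝ) ≤ 2 * α)]

/-- basic convergence rates, estimate form. -/
theorem basic_rates_estimate
    {U V : Type*} [NormedAddCommGroup U] [InnerProductSpace ℝ U] [CompleteSpace U]
    [NormedAddCommGroup V] [InnerProductSpace ℝ V] [CompleteSpace V]
    (F : U →L[ℝ] V) (R : U → EReal) (hRbot : ∀ u, R u ≠ ⊥) (hconv : ErealConvexOn R)
    (ν : ℝ) (hν0 : 0 < ν) (hν1 : ν ≤ 1 / 2)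
    (P : U →L[ℝ] U) (hP : IsFractionalPower ((adjoint F).comp F) ν P)
    (udag : U) (vdag : V) (hud : F udag = vdag)
    (ωdag ξdag : U) (hξ : ξdag = P ωdag) (hsub : IsSubgradient R ξdag udag)
    (M : ℝ) (hM : 0 < M) :
    ∃ C₂ C₃ : ℝ, 0 < C₂ ∧ 0 < C₃ ∧
      ∀ δ α : ℝ, 0 < δ → 0 < α → ∀ vδ : V, ‖vdag - vδ‖ ≤ δ →
        ∀ uαδ : U, (∀ u, Tik F R α vδ uαδ ≤ Tik F R α vδ u) → ‖uαδ - udag‖ ≤ M →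
          Breg R ξdag uαδ udag
            ≤ ((δ ^ 2 / (2 * α) + C₂ * δ ^ (2 * ν) + C₃ * α ^ (ν / (1 - ν)) : ℝ) : EReal) :=
  basic_rates_estimate_general F R hRbot ν hν0 hν1 P hP udag vdag hud ωdag ξdag hξ hsub M
end
end
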